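/- The Clifford generators can be 𝕆-linearly recovered from the octonionic Witt basis: for every i ∈ {0,…,7}, 1 ⊗ g_i = (1/8)·(conj(e_i) ⊗ 1)·(Σ_{j=0}^{7} (−1)^{σ(j,i)}·f_j) in 𝕆 ⊗ Cl₈. -/

import Mathlib

noncomputable section

open scoped Quaternion TensorProduct

/-- The octonions, realized as the Cayley–Dickson double of the quaternions. -/
def Oct : Type := ℍ × ℍ

namespace Oct

instance : AddCommGroup Oct := (inferInstance : AddCommGroup (ℍ × ℍ))
instance : Module ℝ Oct := (inferInstance : Module ℝ (ℍ × ℍ))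

/-- First (quaternionic) component. -/
def x (p : Oct) : ℍ := Prod.fst p
/-- Second (quaternionic) component. -/
def y (p : Oct) : ℍ := Prod.snd p
/-- Build an octonion from two quaternions. -/
def mk (a b : ℍ) : Oct := ((a, b) : ℍ × ℍ)

@[simp] lemma x_mk (a b : ℍ) : (mk a b).x = a := rfl
@[simp] lemma y_mk (a b : ℍ) : (mk a b).y = b := rfl
@[simp] lemma x_add (p q : Oct) : (p + q).x = p.x + q.x := rfl
@[simp] lemma y_add (p q : Oct) : (p + q).y = p.y + q.y := rfl
@[simp] lemma x_smul (r : ℝ) (p : Oct) : (r • p).x = r • p.x := rfl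
@[simp] lemma y_smul (r : ℝ) (p : Oct) : (r • p).y = r • p.y := rfl
@[simp] lemma x_zero : (0 : Oct).x = 0 := rfl
@[simp] lemma y_zero : (0 : Oct).y = 0 := rfl

@[ext] lemma ext {p q : Oct} (h1 : p.x = q.x) (h2 : p.y = q.y) : p = q :=
  Prod.ext h1 h2

/-- Cayley–Dickson multiplication: `(a,b)·(c,d) = (a·c − conj(d)·b, d·a + b·conj(c))`. -/
instance : Mul Oct :=
  ⟨fun p q => mk (p.x * q.x - star q.y * p.y) (q.y * p.x + p.y * star q.x)⟩

instance : One Oct := ⟨mk 1 0⟩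

@[simp] lemma x_mul (p q : Oct) : (p * q).x = p.x * q.x - star q.y * p.y := rfl
@[simp] lemma y_mul (p q : Oct) : (p * q).y = q.y * p.x + p.y * star q.x := rfl
@[simp] lemma x_one : (1 : Oct).x = 1 := rfl
@[simp] lemma y_one : (1 : Oct).y = 0 := rfl

instance : NonUnitalNonAssocRing Oct :=
  { (inferInstance : AddCommGroup Oct) with
    mul := (· * ·)
    left_distrib := by
      intro p q r
      refine ext ?_ ?_ <;>
        simp only [x_mul, y_mul, x_add, y_add, star_add] <;> noncomm_ring
    right_distrib := by
      intro p q r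
      refine ext ?_ ?_ <;>
        simp only [x_mul, y_mul, x_add, y_add, star_add] <;> noncomm_ring
    zero_mul := by
      intro p
      refine ext ?_ ?_ <;> simp only [x_mul, y_mul, x_zero, y_zero, star_zero] <;> simp
    mul_zero := by
      intro p
      refine ext ?_ ?_ <;> simp only [x_mul, y_mul, x_zero, y_zero, star_zero] <;> simp }

instance : SMulCommClass ℝ Oct Oct where
  smul_comm r p q := by
    show r • (p * q) = p * (r • q)
    refine ext ?_ ?_ <;>
      simp [x_mul, y_mul, smul_sub, smul_add, mul_smul_comm, smul_mul_assoc,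
        star_smul, star_trivial]

instance : IsScalarTower ℝ Oct Oct where
  smul_assoc r p q := by
    show (r • p) * q = r • (p * q)
    refine ext ?_ ?_ <;>
      simp [x_mul, y_mul, smul_sub, smul_add, mul_smul_comm, smul_mul_assoc,
        star_smul, star_trivial]

/-- Octonionic conjugation: `conj (a,b) = (conj a, −b)`. -/
def conj (p : Oct) : Oct := mk (star p.x) (-p.y)

/-- The real part of an octonion. -/
def re (p : Oct) : ℝ := p.x.re

/-- The standard basis `e_0, …, e_7` of the octonions. -/
def e : Fin 8 → Oct :=
  ![mk 1 0, mk ⟨0, 1, 0, 0⟩ 0, mk ⟨0, 0, 1, 0⟩ 0, mk ⟨0, 0, 0, 1⟩ 0,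
    mk 0 1, mk 0 ⟨0, 1, 0, 0⟩, mk 0 ⟨0, 0, 1, 0⟩, mk 0 ⟨0, 0, 0, 1⟩]

/-- The real coordinates of an octonion with respect to the standard basis. -/
def coord : Fin 8 → Oct → ℝ :=
  ![fun p => p.x.re, fun p => p.x.imI, fun p => p.x.imJ, fun p => p.x.imK,
    fun p => p.y.re, fun p => p.y.imI, fun p => p.y.imJ, fun p => p.y.imK]

lemma coord_add (j : Fin 8) (p q : Oct) :
    coord j (p + q) = coord j p + coord j q := by fin_cases j <;> rfl

lemma coord_smul (j : Fin 8) (r : ℝ) (p : Oct) :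
    coord j (r • p) = r * coord j p := by fin_cases j <;> rfl

/-- The binary "dot product" `⟨i,j⟩ = i₁j₁ + i₂j₂ + i₃j₃` of binary digits. -/
def bdot (i j : Fin 8) : ℕ :=
  ((i.val.testBit 0 && j.val.testBit 0).toNat +
   (i.val.testBit 1 && j.val.testBit 1).toNat +
   (i.val.testBit 2 && j.val.testBit 2).toNat) % 2

/-- The involution `J_i`, the ℝ-linear map determined by `J_i(e_j) = (−1)^{⟨i,j⟩} e_j`. -/
def J (i : Fin 8) : Oct →ₗ[ℝ] Oct where
  toFun p := ∑ j : Fin 8, ((-1 : ℝ) ^ bdot i j * coord j p) • e j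
  map_add' p q := by
    simp only [coord_add, mul_add, add_smul]
    rw [Finset.sum_add_distrib]
  map_smul' r p := by
    simp only [coord_smul, RingHom.id_apply, Finset.smul_sum, smul_smul, mul_left_comm]

/-- The sign `σ(j,i)` defined by `J_j(conj e_i) = (−1)^{σ(j,i)} e_i`. -/
def sigma (j i : Fin 8) : ℕ := if i = 0 then 0 else (bdot j i + 1) % 2

end Oct
namespace Oct

@[simp] lemma e_0 : e 0 = mk 1 0 := rfl
@[simp] lemma e_1 : e 1 = mk ⟨0, 1, 0, 0⟩ 0 := rfl
@[simp] lemma e_2 : e 2 = mk ⟨0, 0, 1, 0⟩ 0 := rfl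
@[simp] lemma e_3 : e 3 = mk ⟨0, 0, 0, 1⟩ 0 := rfl
@[simp] lemma e_4 : e 4 = mk 0 1 := rfl
@[simp] lemma e_5 : e 5 = mk 0 ⟨0, 1, 0, 0⟩ := rfl
@[simp] lemma e_6 : e 6 = mk 0 ⟨0, 0, 1, 0⟩ := rfl
@[simp] lemma e_7 : e 7 = mk 0 ⟨0, 0, 0, 1⟩ := rfl

@[simp] lemma coord_0 (p : Oct) : coord 0 p = p.x.re := rfl
@[simp] lemma coord_1 (p : Oct) : coord 1 p = p.x.imI := rfl
@[simp] lemma coord_2 (p : Oct) : coord 2 p = p.x.imJ := rfl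
@[simp] lemma coord_3 (p : Oct) : coord 3 p = p.x.imK := rfl
@[simp] lemma coord_4 (p : Oct) : coord 4 p = p.y.re := rfl
@[simp] lemma coord_5 (p : Oct) : coord 5 p = p.y.imI := rfl
@[simp] lemma coord_6 (p : Oct) : coord 6 p = p.y.imJ := rfl
@[simp] lemma coord_7 (p : Oct) : coord 7 p = p.y.imK := rfl

lemma coord_e (l m : Fin 8) : coord l (e m) = if l = m then 1 else 0 := by
  fin_cases l <;> fin_cases m <;> rfl

lemma sum_coord_smul_e (p : Oct) : ∑ l : Fin 8, coord l p • e l = p := by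
  have hx : ∀ (a : ℍ[ℝ,-1,0,-1]) (b : ℍ), (mk a b).x = a := fun _ _ => rfl
  have hy : ∀ (a : ℍ) (b : ℍ[ℝ,-1,0,-1]), (mk a b).y = b := fun _ _ => rfl
  have hx' : ∀ (a : ℍ) (b : ℍ[ℝ,-1,0,-1]), (mk a b).x = a := fun _ _ => rfl
  have hy' : ∀ (a : ℍ[ℝ,-1,0,-1]) (b : ℍ), (mk a b).y = b := fun _ _ => rfl
  have hs : ∀ (r : ℝ) (q : ℍ[ℝ,-1,0,-1]), (@HSMul.hSMul ℝ ℍ ℍ _ r q).re = r * q.re ∧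
      (@HSMul.hSMul ℝ ℍ ℍ _ r q).imI = r * q.imI ∧ (@HSMul.hSMul ℝ ℍ ℍ _ r q).imJ = r * q.imJ ∧
      (@HSMul.hSMul ℝ ℍ ℍ _ r q).imK = r * q.imK := fun _ _ => ⟨rfl, rfl, rfl, rfl⟩
  refine ext ?_ ?_ <;>
    · simp only [Fin.sum_univ_eight, e_0, e_1, e_2, e_3, e_4, e_5, e_6, e_7,
        coord_0, coord_1, coord_2, coord_3, coord_4, coord_5, coord_6, coord_7,
        x_add, y_add, x_smul, y_smul, x_mk, y_mk]
      ext <;> simp [hx, hy, hx', hy', hs]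

end Oct

/-- The ℝ-linear isomorphism `Φ : ℝ⁸ → 𝕆` with `Φ(b_l) = e_l`. -/
def Phi : EuclideanSpace ℝ (Fin 8) ≃ₗ[ℝ] Oct where
  toFun v := ∑ l : Fin 8, v l • Oct.e l
  map_add' u v := by
    simp only [PiLp.add_apply, add_smul]
    rw [Finset.sum_add_distrib]
  map_smul' r v := by
    simp only [PiLp.smul_apply, smul_eq_mul, RingHom.id_apply, Finset.smul_sum, smul_smul]
  invFun p := (WithLp.toLp 2 (fun l => Oct.coord l p) : EuclideanSpace ℝ (Fin 8))
  left_inv v := by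
    have hx : ∀ (a : ℍ[ℝ,-1,0,-1]) (b : ℍ), (Oct.mk a b).x = a := fun _ _ => rfl
    have hy : ∀ (a : ℍ) (b : ℍ[ℝ,-1,0,-1]), (Oct.mk a b).y = b := fun _ _ => rfl
    have hx' : ∀ (a : ℍ) (b : ℍ[ℝ,-1,0,-1]), (Oct.mk a b).x = a := fun _ _ => rfl
    have hy' : ∀ (a : ℍ[ℝ,-1,0,-1]) (b : ℍ), (Oct.mk a b).y = b := fun _ _ => rfl
    have hs : ∀ (r : ℝ) (q : ℍ[ℝ,-1,0,-1]), (@HSMul.hSMul ℝ ℍ ℍ _ r q).re = r * q.re ∧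
        (@HSMul.hSMul ℝ ℍ ℍ _ r q).imI = r * q.imI ∧ (@HSMul.hSMul ℝ ℍ ℍ _ r q).imJ = r * q.imJ ∧
        (@HSMul.hSMul ℝ ℍ ℍ _ r q).imK = r * q.imK := fun _ _ => ⟨rfl, rfl, rfl, rfl⟩
    ext l
    fin_cases l <;>
      simp [Fin.sum_univ_eight, Oct.coord_add, Oct.coord_smul, Oct.coord_e, hx, hy, hx', hy', hs]
  right_inv p := Oct.sum_coord_smul_e p

/-- The quadratic form `Q(v) = −‖v‖²` on ℝ⁸. -/
def Q8 : QuadraticForm ℝ (EuclideanSpace ℝ (Fin 8)) :=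
  - LinearMap.BilinMap.toQuadraticMap
      (innerₗ (EuclideanSpace ℝ (Fin 8)) : LinearMap.BilinForm ℝ (EuclideanSpace ℝ (Fin 8)))

/-- The Clifford algebra `Cl₈` of `Q(v) = −‖v‖²` on ℝ⁸. -/
abbrev Cl8 := CliffordAlgebra Q8

/-- The Clifford generators `g_l := ι(b_l)`. -/
def g (l : Fin 8) : Cl8 := CliffordAlgebra.ι Q8 (EuclideanSpace.single l 1)

/-- The extension `J_j ⊗ id` of `J_j` to `𝕆 ⊗ Cl₈`. -/
def JT (j : Fin 8) : Oct ⊗[ℝ] Cl8 →ₗ[ℝ] Oct ⊗[ℝ] Cl8 :=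
  TensorProduct.map (Oct.J j) LinearMap.id

/-- The element `Ω := Σᵢ conj(eᵢ) ⊗ gᵢ` of `𝕆 ⊗ Cl₈`. -/
def Omega : Oct ⊗[ℝ] Cl8 := ∑ i : Fin 8, (Oct.e i).conj ⊗ₜ[ℝ] g i

/-- The octonionic Witt basis `f_j := (J_j ⊗ id)(Ω)`. -/
def f (j : Fin 8) : Oct ⊗[ℝ] Cl8 := JT j Omega

/-- The twistor vectors `X_i := Φ⁻¹(Φ(X)·conj(e_i))`. -/
def Xtw (X : EuclideanSpace ℝ (Fin 8)) (i : Fin 8) : EuclideanSpace ℝ (Fin 8) :=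
  Phi.symm (Phi X * (Oct.e i).conj)

/-- The Hermitian variables `Z_j := (J_j ⊗ id)(Ω·(Φ(X) ⊗ 1))`. -/
def Z (X : EuclideanSpace ℝ (Fin 8)) (j : Fin 8) : Oct ⊗[ℝ] Cl8 :=
  JT j (Omega * (Phi X ⊗ₜ[ℝ] (1 : Cl8)))

/-!
The signs `H j k = (-1)^{σ(j,k)}` form a Hadamard matrix, `Hᵀ H = 8`, and by the defining
property of `σ` the Witt basis is `f j = ∑ₖ H j k • (e k ⊗ g k)`. Hence `∑ⱼ H j i • f j` is
`8 • (e i ⊗ g i)`, and left multiplication by `conj (e i) ⊗ 1` only needs the single octonion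
product `conj (e i) * e i = 1`, so non-associativity never enters.
-/

namespace Oct

lemma ext_coord {p q : Oct} (h : ∀ l, coord l p = coord l q) : p = q := by
  rw [← sum_coord_smul_e p, ← sum_coord_smul_e q]
  simp only [h]

lemma sigma_zero (k : Fin 8) : sigma 0 k = if k = 0 then 0 else 1 := by
  revert k; decide

lemma coord_conj (l : Fin 8) (p : Oct) : coord l p.conj = (-1) ^ sigma 0 l * coord l p := by
  fin_cases l <;> simp [conj, sigma_zero]

lemma conj_e (k : Fin 8) : (e k).conj = (-1 : ℝ) ^ sigma 0 k • e k := by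
  refine ext_coord fun l => ?_
  rw [coord_conj, coord_smul, coord_e]
  split_ifs with h <;> simp [h]

lemma J_e (j k : Fin 8) : J j (e k) = (-1 : ℝ) ^ bdot j k • e k := by
  simp only [J, LinearMap.coe_mk, AddHom.coe_mk, coord_e, mul_ite, mul_one, mul_zero,
    ite_smul, zero_smul, Finset.sum_ite_eq', Finset.mem_univ, if_true]

lemma sigma_add_bdot (j k : Fin 8) : (sigma 0 k + bdot j k) % 2 = sigma j k := by
  revert j k; decide

lemma J_conj_e (j k : Fin 8) : J j (e k).conj = (-1 : ℝ) ^ sigma j k • e k := by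
  rw [conj_e, map_smul, J_e, smul_smul, ← pow_add, neg_one_pow_eq_pow_mod_two, sigma_add_bdot]

lemma conj_mul_self (p : Oct) : p.conj * p = (∑ l, coord l p ^ 2) • 1 := by
  refine ext ?_ ?_
  · simp only [x_mul, conj, x_mk, y_mk, mul_neg, sub_neg_eq_add, Quaternion.star_mul_self,
      x_smul, x_one, ← Quaternion.coe_add, Algebra.smul_def, mul_one]
    congr 1
    simp [Quaternion.normSq_def', Fin.sum_univ_eight]
    ring
  · simp [conj]

lemma conj_e_mul_e (k : Fin 8) : (e k).conj * e k = 1 := by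
  simp [conj_mul_self, coord_e]

lemma sum_neg_one_pow_sigma_mul (i k : Fin 8) :
    ∑ j, (-1 : ℝ) ^ sigma j i * (-1) ^ sigma j k = if k = i then 8 else 0 := by
  exact_mod_cast (by decide : ∀ i k : Fin 8,
    ∑ j, (-1 : ℤ) ^ sigma j i * (-1) ^ sigma j k = if k = i then 8 else 0) i k

end Oct

lemma f_eq_sum (j : Fin 8) :
    f j = ∑ k, ((-1 : ℝ) ^ Oct.sigma j k) • (Oct.e k ⊗ₜ[ℝ] g k) := by
  simp only [f, Omega, JT, map_sum, TensorProduct.map_tmul, LinearMap.id_coe, id_eq,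
    Oct.J_conj_e, TensorProduct.smul_tmul']

lemma sum_neg_one_pow_sigma_smul_f (i : Fin 8) :
    ∑ j, ((-1 : ℝ) ^ Oct.sigma j i) • f j = (8 : ℝ) • (Oct.e i ⊗ₜ[ℝ] g i) := by
  simp only [f_eq_sum, Finset.smul_sum, smul_smul]
  rw [Finset.sum_comm]
  simp only [← Finset.sum_smul, Oct.sum_neg_one_pow_sigma_mul, ite_smul, zero_smul,
    Finset.sum_ite_eq', Finset.mem_univ, if_true]

/-- The Clifford generators are `𝕆`-linearly recovered from the octonionic
Witt basis: `1 ⊗ gᵢ = (1/8)·(conj(eᵢ) ⊗ 1)·(Σⱼ (−1)^{σ(j,i)}·fⱼ)`. -/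
theorem clifford_generator_from_witt (i : Fin 8) :
    (1 : Oct) ⊗ₜ[ℝ] g i
      = (8 : ℝ)⁻¹ • (((Oct.e i).conj ⊗ₜ[ℝ] (1 : Cl8)) *
          ∑ j : Fin 8, ((-1 : ℝ) ^ Oct.sigma j i) • f j) := by
  rw [sum_neg_one_pow_sigma_smul_f, mul_smul_comm, Algebra.TensorProduct.tmul_mul_tmul,
    Oct.conj_e_mul_e, one_mul, inv_smul_smul₀ (by norm_num)]
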